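/- Let X be any subshift over a finite alphabet and f : X → (0,∞) a continuous positive function. Then the Hausdorff dimension of R(f) is at most s(X), where s(X) is the unique solution s ≥ 0 of the pressure equation P(−s(f+1)) = 0. No specification or edit-approachability hypothesis is needed for this upper bound. -/

import Mathlib

open Filter MeasureTheory Set
open scoped ENNReal NNReal

noncomputable section

def SeqSpace (A : Type*) : Type _ := ℕ → A

namespace SeqSpace

variable {A : Type*}

/-- `|u ∧ v|`: the length of the longest common prefix of `u` and `v`. -/
def lcp (u v : SeqSpace A) : ℕ := sInf {n | u n ≠ v n}

theorem lcp_mem {u v : SeqSpace A} (h : u ≠ v) : u (lcp u v) ≠ v (lcp u v) := by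
  have hne : {n | u n ≠ v n}.Nonempty := by
    rcases Function.ne_iff.mp h with ⟨n, hn⟩
    exact ⟨n, hn⟩
  exact Nat.sInf_mem hne

theorem min_lcp_le (u v w : SeqSpace A) (huw : u ≠ w) :
    min (lcp u v) (lcp v w) ≤ lcp u w := by
  by_cases h : u (lcp u w) = v (lcp u w)
  · have hvw : v (lcp u w) ≠ w (lcp u w) := h ▸ lcp_mem huw
    exact le_trans (min_le_right _ _) (Nat.sInf_le hvw)
  · exact le_trans (min_le_left _ _) (Nat.sInf_le h)

open scoped Classical in
/-- The metric `d(u,v) = e^{-|u ∧ v|}`. -/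
def sdist (u v : SeqSpace A) : ℝ :=
  if u = v then 0 else Real.exp (-(lcp u v : ℝ))

theorem sdist_nonneg' (u v : SeqSpace A) : 0 ≤ sdist u v := by
  unfold sdist
  split
  · exact le_refl 0
  · exact (Real.exp_pos _).le

theorem lcp_comm (u v : SeqSpace A) : lcp u v = lcp v u := by
  unfold lcp
  congr 1
  ext n
  exact ne_comm

theorem sdist_self' (u : SeqSpace A) : sdist u u = 0 := by simp [sdist]

theorem sdist_comm' (u v : SeqSpace A) : sdist u v = sdist v u := by
  unfold sdist
  by_cases h : u = v
  · simp [h]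
  · rw [if_neg h, if_neg (Ne.symm h), lcp_comm]

theorem sdist_triangle' (u v w : SeqSpace A) : sdist u w ≤ sdist u v + sdist v w := by
  by_cases huw : u = w
  · rw [show sdist u w = 0 by rw [huw]; exact sdist_self' w]
    exact add_nonneg (sdist_nonneg' _ _) (sdist_nonneg' _ _)
  by_cases huv : u = v
  · subst huv
    rw [sdist_self', zero_add]
  by_cases hvw : v = w
  · subst hvw
    rw [sdist_self', add_zero]
  simp only [sdist, if_neg huw, if_neg huv, if_neg hvw]
  have h1 : min (lcp u v) (lcp v w) ≤ lcp u w := min_lcp_le u v w huw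
  rcases le_total (lcp u v) (lcp v w) with hle | hle
  · have h2 : lcp u v ≤ lcp u w := by rw [min_eq_left hle] at h1; exact h1
    have h3 : Real.exp (-(lcp u w : ℝ)) ≤ Real.exp (-(lcp u v : ℝ)) :=
      Real.exp_le_exp.mpr (by exact_mod_cast neg_le_neg (Nat.cast_le.mpr h2))
    linarith [Real.exp_pos (-(lcp v w : ℝ))]
  · have h2 : lcp v w ≤ lcp u w := by rw [min_eq_right hle] at h1; exact h1
    have h3 : Real.exp (-(lcp u w : ℝ)) ≤ Real.exp (-(lcp v w : ℝ)) :=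
      Real.exp_le_exp.mpr (by exact_mod_cast neg_le_neg (Nat.cast_le.mpr h2))
    linarith [Real.exp_pos (-(lcp u v : ℝ))]

theorem sdist_eq_zero' {u v : SeqSpace A} (h : sdist u v = 0) : u = v := by
  by_contra hne
  rw [sdist, if_neg hne] at h
  exact (Real.exp_pos _).ne' h

instance : MetricSpace (SeqSpace A) where
  dist := sdist
  dist_self := sdist_self'
  dist_comm := sdist_comm'
  dist_triangle := sdist_triangle'
  eq_of_dist_eq_zero := sdist_eq_zero'

end SeqSpace

namespace SeqSpace

variable {A : Type*}

/-- The left shift map `σ`. -/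
def shift (x : SeqSpace A) : SeqSpace A := fun n => x (n + 1)

/-- The word `w` occurs in `x` starting at position `k`. -/
def OccursAt (w : List A) (x : SeqSpace A) (k : ℕ) : Prop :=
  ∀ i, (h : i < w.length) → x (k + i) = w[i]'h

/-- The language of `X`: all finite words appearing in some point of `X`. -/
def language (X : Set (SeqSpace A)) : Set (List A) :=
  {w | ∃ x ∈ X, ∃ k, OccursAt w x k}

/-- The cylinder `[w]` of a finite word `w`. -/
def cyl (w : List A) : Set (SeqSpace A) := {x | OccursAt w x 0}

/-- Birkhoff sum `S_n φ = ∑_{k=0}^{n-1} φ ∘ σ^k`. -/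
def birkhoff (φ : SeqSpace A → ℝ) (n : ℕ) (x : SeqSpace A) : ℝ :=
  ∑ k ∈ Finset.range n, φ (shift^[k] x)

/-- The words of length `n` in a collection `D` of words. -/
def wordsOfLen (D : Set (List A)) (n : ℕ) : Set (List A) := {w ∈ D | w.length = n}

/-- Topological pressure `P(D,φ)` of a potential `φ` computed over the words of `D`
(the points of the subshift `X` are used to evaluate the Birkhoff sups over cylinders). -/
def pressure (X : Set (SeqSpace A)) (D : Set (List A)) (φ : SeqSpace A → ℝ) : ℝ :=
  atTop.limsup fun n =>
    Real.log (∑ᶠ w ∈ wordsOfLen D n, Real.exp (sSup (birkhoff φ n '' (X ∩ cyl w)))) / n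

/-- The recurrence set `R(ψ)` of points of `X` with `d(σ^n x, x) < ψ(n)` infinitely often. -/
def recSet (X : Set (SeqSpace A)) (ψ : ℕ → ℝ) : Set (SeqSpace A) :=
  {x ∈ X | ∃ᶠ n in atTop, dist (shift^[n] x) x < ψ n}

/-- The recurrence set `R(f)` of points of `X` with `d(σ^n x, x) ≤ e^{-S_n f(x)}`
infinitely often. -/
def recSetF (X : Set (SeqSpace A)) (f : SeqSpace A → ℝ) : Set (SeqSpace A) :=
  {x ∈ X | ∃ᶠ n in atTop, dist (shift^[n] x) x ≤ Real.exp (-(birkhoff f n x))}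

/-- A single edit of a word: substitution, insertion or deletion of one symbol. -/
def EditStep (w w' : List A) : Prop :=
  (∃ (u₁ u₂ : List A) (a a' : A), w = u₁ ++ a :: u₂ ∧ w' = u₁ ++ a' :: u₂) ∨
  (∃ (u₁ u₂ : List A) (a' : A), w = u₁ ++ u₂ ∧ w' = u₁ ++ a' :: u₂) ∨
  (∃ (u₁ u₂ : List A) (a : A), w = u₁ ++ a :: u₂ ∧ w' = u₁ ++ u₂)

/-- `EditChain n v w` : `v` can be transformed into `w` by `n` edits. -/
def EditChain : ℕ → List A → List A → Prop
  | 0, v, w => v = w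
  | n + 1, v, w => ∃ u, EditStep v u ∧ EditChain n u w

/-- The edit distance `d̂(v,w)`: the minimal number of edits transforming `v` into `w`. -/
def editDist (v w : List A) : ℕ := sInf {n | EditChain n v w}

/-- A mistake function: a nondecreasing `g : ℕ → ℕ` with `g n / n → 0`. -/
def MistakeFunction (g : ℕ → ℕ) : Prop :=
  Monotone g ∧ Tendsto (fun n => (g n : ℝ) / n) atTop (nhds 0)

/-- `L` is edit approachable by `G`. -/
def EditApproachable (L G : Set (List A)) : Prop :=
  ∃ g : ℕ → ℕ, MistakeFunction g ∧ ∀ w ∈ L, ∃ v ∈ G, editDist v w ≤ g w.length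

/-- `G ⊆ L` has (W)-specification with gap length `τ`. -/
def HasSpecW (L G : Set (List A)) (τ : ℕ) : Prop :=
  ∀ v ∈ G, ∀ w ∈ G, ∃ u ∈ L, u.length ≤ τ ∧ v ++ u ++ w ∈ G

/-- The (non-strict) lexicographic order on sequences. -/
def LexLe [LinearOrder A] (u v : SeqSpace A) : Prop :=
  u = v ∨ ∃ n, (∀ i < n, u i = v i) ∧ u n < v n

end SeqSpace

open SeqSpace

/-!
`R(f)` is the limsup of the sets `E(n, w)` of points of the cylinder `[w]`, `|w| = n`, that return
within `e^{-S_n f}` at time `n`. Such a point is `n`-periodic along its first `n + S_n f(x)`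
symbols, so all points of `E(n, w)` share a prefix of length `n + inf_{[w]} S_n f`, whence
`diam E(n, w) ^ t ≤ exp (sup_{[w]} S_n(-t(f+1)))`. Summing over `w` gives the partition function
`Z_n(t)` of the potential `-t(f+1)`, and `Z_n(t) ≤ e^{-(t-s)n} Z_n(s)` because `f ≥ 0`. For
`t > s` the vanishing of the pressure at `s` makes `Z_n(t)` summable, so `μH[t] R(f) = 0` by the
Hausdorff–Cantelli lemma.
-/

open Topology

namespace MeasureTheory

theorem hausdorffMeasure_limsup_eq_zero {M : Type*} [EMetricSpace M] [MeasurableSpace M]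
    [BorelSpace M] {ι : ℕ → Type*} [∀ n, Countable (ι n)] {d : ℝ} (hd : 0 < d)
    (E : ∀ n, ι n → Set M) (hE : ∑' n, ∑' i, Metric.ediam (E n i) ^ d ≠ ∞) :
    μH[d] (limsup (fun n => ⋃ i, E n i) atTop) = 0 := by
  set g : ℕ → ℝ≥0∞ := fun n => ∑' i, Metric.ediam (E n i) ^ d
  have htail : Tendsto (fun N => ∑' k, g (k + N)) atTop (𝓝 0) := ENNReal.tendsto_sum_nat_add g hE
  -- At stage `N` cover by all `E (k + N) i`: the tail sum bounds each `ediam ^ d`, hence the mesh.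
  have hcover := Measure.hausdorffMeasure_le_liminf_tsum d (limsup (fun n => ⋃ i, E n i) atTop)
    (fun N => (∑' k, g (k + N)) ^ d⁻¹)
    (by
      have h := ((ENNReal.continuous_rpow_const (y := d⁻¹)).tendsto 0).comp htail
      rwa [ENNReal.zero_rpow_of_pos (inv_pos.mpr hd)] at h)
    (fun N (p : Σ k, ι (k + N)) => E (p.1 + N) p.2)
    (Eventually.of_forall fun N p => by
      calc Metric.ediam (E (p.1 + N) p.2)
          = (Metric.ediam (E (p.1 + N) p.2) ^ d) ^ d⁻¹ := (ENNReal.rpow_rpow_inv hd.ne' _).symm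
        _ ≤ (∑' k, g (k + N)) ^ d⁻¹ := by
          gcongr
          exact (ENNReal.le_tsum (f := fun i => Metric.ediam (E (p.1 + N) i) ^ d) p.2).trans
            (ENNReal.le_tsum (f := fun k => g (k + N)) p.1))
    (Eventually.of_forall fun N x hx => by
      obtain ⟨n, hn, hxn⟩ := frequently_atTop.mp (mem_limsup_iff_frequently_mem.mp hx) N
      obtain ⟨k, rfl⟩ := Nat.exists_eq_add_of_le' hn
      obtain ⟨i, hi⟩ := mem_iUnion.mp hxn
      exact mem_iUnion.mpr ⟨⟨k, i⟩, hi⟩)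
  refine le_antisymm (hcover.trans_eq ?_) zero_le
  simpa only [ENNReal.tsum_sigma'] using htail.liminf_eq

end MeasureTheory

namespace SeqSpace

variable {A : Type*}

theorem iterate_shift_apply (x : SeqSpace A) (k i : ℕ) : shift^[k] x i = x (i + k) := by
  induction k generalizing x with
  | zero => rfl
  | succ k ih => exact ih (shift x)

theorem mapsTo_iterate_shift {X : Set (SeqSpace A)} (hX : shift '' X ⊆ X) (k : ℕ) :
    MapsTo shift^[k] X X :=
  (mapsTo_iff_image_subset.mpr hX).iterate k

theorem dist_le_exp_neg_of_forall_eq {x y : SeqSpace A} {r : ℝ}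
    (h : ∀ j : ℕ, (j : ℝ) < r → x j = y j) : dist x y ≤ Real.exp (-r) := by
  by_cases hxy : x = y
  · rw [hxy, dist_self]
    exact (Real.exp_pos _).le
  show sdist x y ≤ _
  rw [sdist, if_neg hxy, Real.exp_le_exp, neg_le_neg_iff]
  exact not_lt.mp fun hlt => lcp_mem hxy (h _ hlt)

theorem apply_eq_of_dist_le_exp_neg {x y : SeqSpace A} {r : ℝ} (h : dist x y ≤ Real.exp (-r))
    {j : ℕ} (hj : (j : ℝ) < r) : x j = y j := by
  by_cases hxy : x = y
  · rw [hxy]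
  change sdist x y ≤ _ at h
  rw [sdist, if_neg hxy, Real.exp_le_exp, neg_le_neg_iff] at h
  by_contra hne
  exact absurd (hj.trans_le h) (not_lt.mpr (by exact_mod_cast Nat.sInf_le hne))

theorem apply_eq_of_periodic {x y : SeqSpace A} {n : ℕ} {c : ℝ} (hn : 0 < n)
    (hpre : ∀ j < n, x j = y j) (hx : ∀ i : ℕ, (i : ℝ) < c → x (i + n) = x i)
    (hy : ∀ i : ℕ, (i : ℝ) < c → y (i + n) = y i) (j : ℕ) (hj : (j : ℝ) < n + c) :
    x j = y j := by
  induction j using Nat.strong_induction_on with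
  | _ j ih =>
    rcases lt_or_ge j n with hjn | hjn
    · exact hpre j hjn
    obtain ⟨i, rfl⟩ := Nat.exists_eq_add_of_le' hjn
    have hi : (i : ℝ) < c := by push_cast at hj; linarith
    rw [hx i hi, hy i hi]
    exact ih i (by omega) (by linarith [(Nat.cast_nonneg n : (0 : ℝ) ≤ n)])

theorem inter_cyl_nonempty {X : Set (SeqSpace A)} (hX : shift '' X ⊆ X) {w : List A}
    (hw : w ∈ language X) : (X ∩ cyl w).Nonempty := by
  obtain ⟨x, hx, k, hocc⟩ := hw
  refine ⟨shift^[k] x, mapsTo_iterate_shift hX k hx, fun i hi => ?_⟩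
  rw [iterate_shift_apply, zero_add, add_comm]
  exact hocc i hi

theorem mem_cyl_ofFn (x : SeqSpace A) (n : ℕ) : x ∈ cyl (List.ofFn fun i : Fin n => x i) :=
  fun i hi => by simp

theorem ofFn_mem_wordsOfLen {X : Set (SeqSpace A)} {x : SeqSpace A} (hx : x ∈ X) (n : ℕ) :
    (List.ofFn fun i : Fin n => x i) ∈ wordsOfLen (language X) n :=
  ⟨⟨x, hx, 0, mem_cyl_ofFn x n⟩, List.length_ofFn⟩

theorem finite_wordsOfLen [Finite A] (D : Set (List A)) (n : ℕ) : (wordsOfLen D n).Finite :=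
  (List.finite_length_eq A n).subset fun _ hw => hw.2

theorem ncard_wordsOfLen_le [Finite A] (D : Set (List A)) (n : ℕ) :
    (wordsOfLen D n).ncard ≤ Nat.card A ^ n :=
  calc (wordsOfLen D n).ncard ≤ {w : List A | w.length = n}.ncard :=
        ncard_le_ncard (fun _ hw => hw.2) (List.finite_length_eq A n)
    _ = Nat.card (Fin n → A) := Nat.card_congr (Equiv.vectorEquivFin A n)
    _ = Nat.card A ^ n := by rw [Nat.card_fun, Nat.card_fin]

theorem birkhoff_nonneg {X : Set (SeqSpace A)} (hX : shift '' X ⊆ X) {f : SeqSpace A → ℝ}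
    (hf : ∀ x ∈ X, 0 ≤ f x) {x : SeqSpace A} (hx : x ∈ X) (n : ℕ) : 0 ≤ birkhoff f n x :=
  Finset.sum_nonneg fun k _ => hf _ (mapsTo_iterate_shift hX k hx)

theorem birkhoff_nonpos {X : Set (SeqSpace A)} (hX : shift '' X ⊆ X) {φ : SeqSpace A → ℝ}
    (hφ : ∀ x ∈ X, φ x ≤ 0) {x : SeqSpace A} (hx : x ∈ X) (n : ℕ) : birkhoff φ n x ≤ 0 :=
  Finset.sum_nonpos fun k _ => hφ _ (mapsTo_iterate_shift hX k hx)

theorem birkhoff_neg_mul_add_one (f : SeqSpace A → ℝ) (u : ℝ) (n : ℕ) (x : SeqSpace A) :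
    birkhoff (fun y => -(u * (f y + 1))) n x = -(u * (birkhoff f n x + n)) := by
  simp only [birkhoff, Finset.sum_neg_distrib, ← Finset.mul_sum, Finset.sum_add_distrib,
    Finset.sum_const, Finset.card_range, nsmul_eq_mul, mul_one]

theorem neg_mul_add_one_nonpos {X : Set (SeqSpace A)} {f : SeqSpace A → ℝ}
    (hf : ∀ x ∈ X, 0 ≤ f x) {u : ℝ} (hu : 0 ≤ u) : ∀ x ∈ X, -(u * (f x + 1)) ≤ 0 :=
  fun x hx => neg_nonpos.mpr (mul_nonneg hu (by linarith [hf x hx]))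

theorem bddAbove_birkhoff_image {X : Set (SeqSpace A)} (hX : shift '' X ⊆ X)
    {φ : SeqSpace A → ℝ} (hφ : ∀ x ∈ X, φ x ≤ 0) (n : ℕ) (w : List A) :
    BddAbove (birkhoff φ n '' (X ∩ cyl w)) :=
  ⟨0, by rintro _ ⟨x, hx, rfl⟩; exact birkhoff_nonpos hX hφ hx.1 n⟩

def partitionSum (X : Set (SeqSpace A)) (D : Set (List A)) (φ : SeqSpace A → ℝ) (n : ℕ) : ℝ :=
  ∑ᶠ w ∈ wordsOfLen D n, Real.exp (sSup (birkhoff φ n '' (X ∩ cyl w)))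

theorem pressure_eq_limsup (X : Set (SeqSpace A)) (D : Set (List A)) (φ : SeqSpace A → ℝ) :
    pressure X D φ = limsup (fun n : ℕ => Real.log (partitionSum X D φ n) / n) atTop :=
  rfl

section PartitionSum

variable [Finite A] {X : Set (SeqSpace A)} {D : Set (List A)} {φ : SeqSpace A → ℝ}

theorem partitionSum_eq_sum (X : Set (SeqSpace A)) (D : Set (List A)) (φ : SeqSpace A → ℝ)
    (n : ℕ) : partitionSum X D φ n =
      ∑ w ∈ (finite_wordsOfLen D n).toFinset, Real.exp (sSup (birkhoff φ n '' (X ∩ cyl w))) :=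
  finsum_mem_eq_finite_toFinset_sum _ _

theorem partitionSum_nonneg (X : Set (SeqSpace A)) (D : Set (List A)) (φ : SeqSpace A → ℝ)
    (n : ℕ) : 0 ≤ partitionSum X D φ n := by
  rw [partitionSum_eq_sum]
  exact Finset.sum_nonneg fun _ _ => (Real.exp_pos _).le

theorem ofReal_partitionSum (X : Set (SeqSpace A)) (D : Set (List A)) (φ : SeqSpace A → ℝ)
    (n : ℕ) : ENNReal.ofReal (partitionSum X D φ n) =
      ∑' w : wordsOfLen D n, ENNReal.ofReal (Real.exp (sSup (birkhoff φ n '' (X ∩ cyl w)))) := by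
  have := (finite_wordsOfLen D n).to_subtype
  rw [partitionSum, ← finsum_set_coe_eq_finsum_mem,
    ← ENNReal.ofReal_tsum_of_nonneg (fun _ => (Real.exp_pos _).le) Summable.of_finite,
    tsum_eq_finsum (toFinite _)]

theorem partitionSum_le_card_pow (hX : shift '' X ⊆ X) (hφ : ∀ x ∈ X, φ x ≤ 0) (n : ℕ) :
    partitionSum X D φ n ≤ (Nat.card A : ℝ) ^ n := by
  rw [partitionSum_eq_sum]
  calc ∑ w ∈ (finite_wordsOfLen D n).toFinset, Real.exp (sSup (birkhoff φ n '' (X ∩ cyl w)))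
      ≤ ∑ w ∈ (finite_wordsOfLen D n).toFinset, 1 :=
        Finset.sum_le_sum fun w _ => Real.exp_le_one_iff.mpr <|
          Real.sSup_nonpos fun _ ⟨x, hx, hxb⟩ => hxb ▸ birkhoff_nonpos hX hφ hx.1 n
    _ = (wordsOfLen D n).ncard := by
        rw [Finset.sum_const, nsmul_one, ncard_eq_toFinset_card _ (finite_wordsOfLen D n)]
    _ ≤ (Nat.card A : ℝ) ^ n := by exact_mod_cast ncard_wordsOfLen_le D n

theorem isBoundedUnder_log_partitionSum (hX : shift '' X ⊆ X) (hφ : ∀ x ∈ X, φ x ≤ 0) :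
    IsBoundedUnder (· ≤ ·) atTop fun n : ℕ => Real.log (partitionSum X D φ n) / n := by
  refine isBoundedUnder_of ⟨Real.log (Nat.card A), fun n => ?_⟩
  rcases n.eq_zero_or_pos with rfl | hn
  · simpa using Real.log_natCast_nonneg _
  rw [div_le_iff₀ (by exact_mod_cast hn)]
  rcases (partitionSum_nonneg X D φ n).eq_or_lt with h0 | hpos
  · rw [← h0, Real.log_zero]
    exact mul_nonneg (Real.log_natCast_nonneg _) n.cast_nonneg
  calc Real.log (partitionSum X D φ n) ≤ Real.log ((Nat.card A : ℝ) ^ n) :=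
        Real.log_le_log hpos (partitionSum_le_card_pow hX hφ n)
    _ = _ := by rw [Real.log_pow, mul_comm]

theorem eventually_partitionSum_le_exp
    (hbdd : IsBoundedUnder (· ≤ ·) atTop fun n : ℕ => Real.log (partitionSum X D φ n) / n)
    {c : ℝ} (h : pressure X D φ < c) :
    ∀ᶠ n : ℕ in atTop, partitionSum X D φ n ≤ Real.exp (c * n) := by
  rw [pressure_eq_limsup] at h
  filter_upwards [eventually_lt_of_limsup_lt h hbdd, eventually_gt_atTop 0] with n hlt hn
  rcases (partitionSum_nonneg X D φ n).eq_or_lt with h0 | hpos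
  · rw [← h0]
    exact (Real.exp_pos _).le
  rw [← Real.log_le_iff_le_exp hpos]
  exact ((div_lt_iff₀ (by exact_mod_cast hn)).mp hlt).le

theorem partitionSum_le_exp_mul {f : SeqSpace A → ℝ} (hX : shift '' X ⊆ X)
    (hf : ∀ x ∈ X, 0 ≤ f x) {s t : ℝ} (hs : 0 ≤ s) (hst : s ≤ t) (n : ℕ) :
    partitionSum X (language X) (fun x => -(t * (f x + 1))) n ≤
      Real.exp (-((t - s) * n)) * partitionSum X (language X) (fun x => -(s * (f x + 1))) n := by
  rw [partitionSum_eq_sum, partitionSum_eq_sum, Finset.mul_sum]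
  refine Finset.sum_le_sum fun w hw => ?_
  rw [← Real.exp_add, Real.exp_le_exp]
  have hne := inter_cyl_nonempty hX ((finite_wordsOfLen _ n).mem_toFinset.mp hw).1
  refine csSup_le (hne.image _) ?_
  rintro _ ⟨x, hx, rfl⟩
  have hsup := le_csSup (bddAbove_birkhoff_image hX (neg_mul_add_one_nonpos hf hs) n w)
    (mem_image_of_mem _ hx)
  rw [birkhoff_neg_mul_add_one] at hsup ⊢
  nlinarith [birkhoff_nonneg hX hf hx.1 n]

theorem summable_partitionSum {f : SeqSpace A → ℝ} (hX : shift '' X ⊆ X)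
    (hf : ∀ x ∈ X, 0 ≤ f x) {s t : ℝ} (hs : 0 ≤ s) (hst : s < t)
    (hP : pressure X (language X) (fun x => -(s * (f x + 1))) ≤ 0) :
    Summable fun n => partitionSum X (language X) (fun x => -(t * (f x + 1))) n := by
  have hε : 0 < (t - s) / 2 := by linarith
  have hZs := eventually_partitionSum_le_exp
    (isBoundedUnder_log_partitionSum hX (neg_mul_add_one_nonpos hf hs)) (hP.trans_lt hε)
  refine (summable_geometric_of_lt_one (Real.exp_pos _).le
    (Real.exp_lt_one_iff.mpr (neg_lt_zero.mpr hε))).of_norm_bounded_eventually_nat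
    (hZs.mono fun n hn => ?_)
  rw [Real.norm_of_nonneg (partitionSum_nonneg _ _ _ n), ← Real.exp_nat_mul]
  calc _ ≤ Real.exp (-((t - s) * n)) * partitionSum X (language X) (fun x => -(s * (f x + 1))) n :=
        partitionSum_le_exp_mul hX hf hs hst.le n
    _ ≤ Real.exp (-((t - s) * n)) * Real.exp ((t - s) / 2 * n) := by gcongr
    _ = Real.exp (n * -((t - s) / 2)) := by rw [← Real.exp_add]; ring_nf

end PartitionSum

def recCyl (X : Set (SeqSpace A)) (f : SeqSpace A → ℝ) (n : ℕ) (w : List A) :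
    Set (SeqSpace A) :=
  {x ∈ X ∩ cyl w | dist (shift^[n] x) x ≤ Real.exp (-birkhoff f n x)}

theorem recSetF_subset_limsup (X : Set (SeqSpace A)) (f : SeqSpace A → ℝ) :
    recSetF X f ⊆
      limsup (fun n => ⋃ w : wordsOfLen (language X) (n + 1), recCyl X f (n + 1) w) atTop := by
  rintro x ⟨hx, hrec⟩
  rw [← map_add_atTop_eq_nat 1, frequently_map] at hrec
  exact mem_limsup_iff_frequently_mem.mpr <| hrec.mono fun n hn =>
    mem_iUnion.mpr ⟨⟨_, ofFn_mem_wordsOfLen hx (n + 1)⟩, ⟨hx, mem_cyl_ofFn x (n + 1)⟩, hn⟩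

theorem ediam_recCyl_le {X : Set (SeqSpace A)} {f : SeqSpace A → ℝ} {n : ℕ} (hn : 0 < n)
    {w : List A} (hw : w.length = n) {c : ℝ} (hc : ∀ x ∈ recCyl X f n w, c ≤ birkhoff f n x) :
    Metric.ediam (recCyl X f n w) ≤ ENNReal.ofReal (Real.exp (-(n + c))) := by
  have hper : ∀ x ∈ recCyl X f n w, ∀ i : ℕ, (i : ℝ) < c → x (i + n) = x i := fun x hx i hi => by
    rw [← iterate_shift_apply x n i]
    exact apply_eq_of_dist_le_exp_neg hx.2 (hi.trans_le (hc x hx))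
  refine Metric.ediam_le fun x hx y hy => ?_
  rw [edist_dist]
  refine ENNReal.ofReal_le_ofReal (dist_le_exp_neg_of_forall_eq
    (apply_eq_of_periodic hn (fun j hj => ?_) (hper x hx) (hper y hy)))
  have hx' := hx.1.2 j (hw ▸ hj)
  have hy' := hy.1.2 j (hw ▸ hj)
  rw [zero_add] at hx' hy'
  rw [hx', hy']

theorem ediam_recCyl_rpow_le {X : Set (SeqSpace A)} (hX : shift '' X ⊆ X)
    {f : SeqSpace A → ℝ} (hf : ∀ x ∈ X, 0 ≤ f x) {t : ℝ} (ht : 0 < t) {n : ℕ} (hn : 0 < n)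
    {w : List A} (hw : w.length = n) :
    Metric.ediam (recCyl X f n w) ^ t ≤
      ENNReal.ofReal (Real.exp (sSup (birkhoff (fun y => -(t * (f y + 1))) n '' (X ∩ cyl w)))) := by
  set b := sSup (birkhoff (fun y => -(t * (f y + 1))) n '' (X ∩ cyl w))
  have hc : ∀ x ∈ recCyl X f n w, -b / t - n ≤ birkhoff f n x := fun x hx => by
    have hb := le_csSup (bddAbove_birkhoff_image hX (neg_mul_add_one_nonpos hf ht.le) n w)
      (mem_image_of_mem _ hx.1)
    rw [birkhoff_neg_mul_add_one] at hb
    rw [sub_le_iff_le_add, div_le_iff₀ ht]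
    linarith
  calc Metric.ediam (recCyl X f n w) ^ t
      ≤ ENNReal.ofReal (Real.exp (-(n + (-b / t - n)))) ^ t :=
        ENNReal.rpow_le_rpow (ediam_recCyl_le hn hw hc) ht.le
    _ = ENNReal.ofReal (Real.exp b) := by
        rw [ENNReal.ofReal_rpow_of_pos (Real.exp_pos _), ← Real.exp_mul]
        congr 2
        field_simp
        ring

theorem hausdorffMeasure_recSetF_eq_zero [Finite A] [MeasurableSpace (SeqSpace A)]
    [BorelSpace (SeqSpace A)] {X : Set (SeqSpace A)} (hX : shift '' X ⊆ X)
    {f : SeqSpace A → ℝ} (hf : ∀ x ∈ X, 0 ≤ f x) {s t : ℝ} (hs : 0 ≤ s) (hst : s < t)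
    (hP : pressure X (language X) (fun x => -(s * (f x + 1))) ≤ 0) :
    μH[t] (recSetF X f) = 0 := by
  have ht : 0 < t := hs.trans_lt hst
  have hZ : Summable fun n => partitionSum X (language X) (fun x => -(t * (f x + 1))) (n + 1) :=
    (summable_nat_add_iff 1).mpr (summable_partitionSum hX hf hs hst hP)
  have hsum : ∑' n, ∑' w : wordsOfLen (language X) (n + 1),
      Metric.ediam (recCyl X f (n + 1) w) ^ t ≤ ENNReal.ofReal
        (∑' n, partitionSum X (language X) (fun x => -(t * (f x + 1))) (n + 1)) := by
    rw [ENNReal.ofReal_tsum_of_nonneg (fun n => partitionSum_nonneg _ _ _ _) hZ]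
    refine ENNReal.tsum_le_tsum fun n => ?_
    rw [ofReal_partitionSum]
    exact ENNReal.tsum_le_tsum fun w => ediam_recCyl_rpow_le hX hf ht n.succ_pos w.2.2
  exact measure_mono_null (recSetF_subset_limsup X f)
    (hausdorffMeasure_limsup_eq_zero ht _ (ne_top_of_le_ne_top ENNReal.ofReal_ne_top hsum))

end SeqSpace

theorem dimH_recSetF_le_root_of_pressure_general
    {A : Type*} [Finite A] (X : Set (SeqSpace A))
    (hXinv : shift '' X ⊆ X)
    (f : SeqSpace A → ℝ) (hfpos : ∀ x ∈ X, 0 < f x) :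
    ∀ s : ℝ, 0 ≤ s → pressure X (language X) (fun x => -(s * (f x + 1))) = 0 →
      dimH (recSetF X f) ≤ ENNReal.ofReal s := by
  intro s hs hP
  borelize (SeqSpace A)
  refine le_of_not_gt fun hlt => ?_
  obtain ⟨t, hst, htdim⟩ := ENNReal.lt_iff_exists_nnreal_btwn.mp hlt
  rw [← ENNReal.ofReal_coe_nnreal, ENNReal.ofReal_lt_ofReal_iff_of_nonneg hs] at hst
  have hinf := hausdorffMeasure_of_lt_dimH htdim
  rw [hausdorffMeasure_recSetF_eq_zero hXinv (fun x hx => (hfpos x hx).le) hs hst hP.le] at hinf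
  exact ENNReal.zero_ne_top hinf

/-- **Upper bound in Theorem 1.5.** For any subshift `X` and any continuous positive
`f : X → (0,∞)`, `dim_H R(f) ≤ s(X)`, where `s(X)` is the unique root `s ≥ 0` of
`P(-s(f+1)) = 0`; no specification hypothesis is needed. -/
theorem dimH_recSetF_le_root_of_pressure
    {A : Type*} [Finite A] (X : Set (SeqSpace A))
    (hXcomp : IsCompact X) (hXinv : shift '' X ⊆ X)
    (f : SeqSpace A → ℝ) (hfc : ContinuousOn f X) (hfpos : ∀ x ∈ X, 0 < f x) :
    ∀ s : ℝ, 0 ≤ s → pressure X (language X) (fun x => -(s * (f x + 1))) = 0 →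
      dimH (recSetF X f) ≤ ENNReal.ofReal s :=
  dimH_recSetF_le_root_of_pressure_general X hXinv f hfpos
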